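/- The conjugate-reflected signal x̃ with x̃_n = conj(x_{-n}) (indices mod N) has the same FROG trace as x: for every k and m, |Σ_n x̃_n x̃_{n+mL} e^{-2πi nk/N}| = |Σ_n x_n x_{n+mL} e^{-2πi nk/N}|. -/

import Mathlib

open Finset

noncomputable def cc (N : ℕ) [NeZero N] (t : ZMod N) : ℂ :=
  Complex.exp (-(2 * Real.pi * Complex.I) * t.val / N)

lemma cc_natCast (N : ℕ) [NeZero N] (a : ℕ) :
    Complex.exp (-(2 * Real.pi * Complex.I) * a / N) = cc N (a : ZMod N) := by
  have hN : (N : ℂ) ≠ 0 := Nat.cast_ne_zero.2 (NeZero.ne N)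
  rw [cc, ZMod.val_natCast]
  obtain ⟨q, r, hqr⟩ : ∃ q r : ℕ, a = N * q + r ∧ r = a % N :=
    ⟨a / N, a % N, (Nat.div_add_mod a N).symm, rfl⟩
  obtain ⟨ha, hr⟩ := hqr
  rw [← hr]
  have h : -(2 * Real.pi * Complex.I) * a / N
      = (-(q : ℕ) : ℤ) * (2 * Real.pi * Complex.I)
        + -(2 * Real.pi * Complex.I) * (r : ℕ) / N := by
    conv_lhs => rw [ha]
    push_cast
    field_simp
    ring
  rw [h, Complex.exp_add, Complex.exp_int_mul_two_pi_mul_I, one_mul]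

lemma cc_mul (N : ℕ) [NeZero N] (s t : ZMod N) : cc N s * cc N t = cc N (s + t) := by
  rw [cc, cc, ← Complex.exp_add]
  have h : -(2 * Real.pi * Complex.I) * s.val / N + -(2 * Real.pi * Complex.I) * t.val / N
      = -(2 * Real.pi * Complex.I) * ((s.val + t.val : ℕ) : ℂ) / N := by
    push_cast; ring
  rw [h, cc_natCast]
  congr 1
  push_cast [ZMod.natCast_val, ZMod.cast_id]
  rfl

lemma cc_abs (N : ℕ) [NeZero N] (t : ZMod N) : ‖cc N t‖ = 1 := by
  have h : -(2 * Real.pi * Complex.I) * (t.val : ℂ) / N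
      = ((-(2 * Real.pi * t.val / N) : ℝ) : ℂ) * Complex.I := by
    push_cast; ring
  rw [cc, h, Complex.norm_exp_ofReal_mul_I]

lemma cc_conj (N : ℕ) [NeZero N] (t : ZMod N) :
    (starRingEnd ℂ) (cc N t) = cc N (-t) := by
  have h1 : cc N t * cc N (-t) = 1 := by
    rw [cc_mul, add_neg_cancel, cc]
    simp
  have h3 : (starRingEnd ℂ) (cc N t) * cc N t = 1 := by
    rw [mul_comm, Complex.mul_conj, Complex.normSq_eq_norm_sq, cc_abs]
    norm_num
  calc (starRingEnd ℂ) (cc N t) = (starRingEnd ℂ) (cc N t) * (cc N t * cc N (-t)) := by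
        rw [h1, mul_one]
    _ = ((starRingEnd ℂ) (cc N t) * cc N t) * cc N (-t) := by ring
    _ = cc N (-t) := by rw [h3, one_mul]

theorem stmt3 (N L : ℕ) [NeZero N] (x : ZMod N → ℂ) :
    ∀ (k : ZMod N) (m : ℕ),
      ‖∑ n : ZMod N,
          (starRingEnd ℂ) (x (-n)) * (starRingEnd ℂ) (x (-(n + (m * L : ℕ)))) *
            Complex.exp (-(2 * Real.pi * Complex.I) * (n.val * k.val) / N)‖
        = ‖∑ n : ZMod N, x n * x (n + (m * L : ℕ)) *
            Complex.exp (-(2 * Real.pi * Complex.I) * (n.val * k.val) / N)‖ := by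
  intro k m
  have hE : ∀ n : ZMod N, Complex.exp (-(2 * Real.pi * Complex.I) * (n.val * k.val) / N)
      = cc N (n * k) := by
    intro n
    have h1 : -(2 * Real.pi * Complex.I) * ((n.val : ℂ) * (k.val : ℂ)) / N
        = -(2 * Real.pi * Complex.I) * ((n.val * k.val : ℕ) : ℂ) / N := by push_cast; ring
    rw [h1, cc_natCast]
    congr 1
    push_cast [ZMod.natCast_val, ZMod.cast_id]
    rfl
  set M : ZMod N := ((m * L : ℕ) : ZMod N) with hM
  simp_rw [hE]
  rw [← Complex.norm_conj, map_sum]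
  have hterm : ∀ n : ZMod N,
      (starRingEnd ℂ) ((starRingEnd ℂ) (x (-n)) * (starRingEnd ℂ) (x (-(n + M))) * cc N (n * k))
        = x (-n) * x (-(n + M)) * cc N ((-n) * k) := by
    intro n
    rw [map_mul, map_mul, Complex.conj_conj, Complex.conj_conj, cc_conj, neg_mul]
  simp_rw [hterm]
  have hre : (∑ n : ZMod N, x (-n) * x (-(n + M)) * cc N ((-n) * k))
      = ∑ n : ZMod N, x n * x (n - M) * cc N (n * k) := by
    apply Fintype.sum_equiv (Equiv.neg (ZMod N))
    intro n
    simp only [Equiv.neg_apply, neg_neg]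
    have h1 : -(n + M) = -n - M := by ring
    rw [h1]
  rw [hre]
  have hre2 : (∑ n : ZMod N, x n * x (n + M) * cc N (n * k) * cc N (M * k))
      = ∑ n : ZMod N, x n * x (n - M) * cc N (n * k) := by
    apply Fintype.sum_equiv (Equiv.addRight M)
    intro n
    simp only [Equiv.coe_addRight]
    have h2 : (n + M) * k = n * k + M * k := by ring
    rw [add_sub_cancel_right, h2, ← cc_mul]
    ring
  rw [← hre2, ← Finset.sum_mul, norm_mul, cc_abs, mul_one]
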